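/- Consider the simplified word-level CNN with non-overlapping windows: positive integers n, k, m, d; window embeddings V : Fin n → Fin k → EuclideanSpace ℝ (Fin d); filters W : Fin m → EuclideanSpace ℝ (Fin d); biases b : Fin m → ℝ; a monotone non-decreasing activation φ : ℝ → ℝ; non-negative output weights w' : Fin m → ℝ; bias b' : ℝ; and improving replacements ⟪W j, V i t⟫ ≥ ⟪W j, V i 0⟫ for all i, j, t. Define C(l) = (Σ_{j : Fin m} w' j · (max_{i : Fin n} φ(⟪W j, V i (l i)⟫ + b j))) + b' for a transformation index l : Fin n → Fin k. If l' extends l (for every i with l i ≠ 0, l' i = l i), then C(l) ≤ C(l'). -/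

import Mathlib

open scoped RealInnerProductSpace

/-- Output of the simplified word-level CNN (non-overlapping windows, no dropout
or softmax) on the input transformed according to `l`. -/
noncomputable def wcnnOutput {n k m d : ℕ} [NeZero n]
    (V : Fin n → Fin k → EuclideanSpace ℝ (Fin d))
    (W : Fin m → EuclideanSpace ℝ (Fin d)) (b : Fin m → ℝ)
    (φ : ℝ → ℝ) (w' : Fin m → ℝ) (b' : ℝ) (l : Fin n → Fin k) : ℝ :=
  (∑ j, w' j *
      Finset.univ.sup' ⟨0, Finset.mem_univ 0⟩ (fun i => φ (⟪W j, V i (l i)⟫ + b j))) + b'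

theorem apply_le_apply_of_extends {ι κ : Type*} [Zero κ] {f : ι → κ → ℝ}
    (hf : ∀ i t, f i 0 ≤ f i t) {l l' : ι → κ} (hext : ∀ i, l i ≠ 0 → l' i = l i) (i : ι) :
    f i (l i) ≤ f i (l' i) := by
  by_cases h : l i = 0
  · rw [h]
    exact hf i (l' i)
  · rw [hext i h]

theorem wcnnOutput_mono {n k m d : ℕ} [NeZero n]
    {V : Fin n → Fin k → EuclideanSpace ℝ (Fin d)}
    {W : Fin m → EuclideanSpace ℝ (Fin d)} (b : Fin m → ℝ)
    {φ : ℝ → ℝ} (hφ : Monotone φ) {w' : Fin m → ℝ} (hw' : ∀ j, 0 ≤ w' j) (b' : ℝ)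
    {l l' : Fin n → Fin k} (h : ∀ i j, ⟪W j, V i (l i)⟫ ≤ ⟪W j, V i (l' i)⟫) :
    wcnnOutput V W b φ w' b' l ≤ wcnnOutput V W b φ w' b' l' := by
  unfold wcnnOutput
  gcongr with j _
  · exact hw' j
  · exact Finset.sup'_mono_fun fun i _ => hφ (add_le_add_left (h i j) _)

theorem stmt_14_general (n k m d : ℕ) [NeZero n] [NeZero k]
    (V : Fin n → Fin k → EuclideanSpace ℝ (Fin d))
    (W : Fin m → EuclideanSpace ℝ (Fin d)) (b : Fin m → ℝ)
    (φ : ℝ → ℝ) (hφ : Monotone φ)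
    (w' : Fin m → ℝ) (hw' : ∀ j, 0 ≤ w' j) (b' : ℝ)
    (hV : ∀ (i : Fin n) (j : Fin m) (t : Fin k), ⟪W j, V i 0⟫ ≤ ⟪W j, V i t⟫)
    (l l' : Fin n → Fin k) (hext : ∀ i : Fin n, l i ≠ 0 → l' i = l i) :
    wcnnOutput V W b φ w' b' l ≤ wcnnOutput V W b φ w' b' l' :=
  wcnnOutput_mono b hφ hw' b' fun i j =>
    apply_le_apply_of_extends (f := fun i t => ⟪W j, V i t⟫) (fun i t => hV i j t) hext i

theorem stmt_14 (n k m d : ℕ) [NeZero n] [NeZero k] [NeZero m] [NeZero d]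
    (V : Fin n → Fin k → EuclideanSpace ℝ (Fin d))
    (W : Fin m → EuclideanSpace ℝ (Fin d)) (b : Fin m → ℝ)
    (φ : ℝ → ℝ) (hφ : Monotone φ)
    (w' : Fin m → ℝ) (hw' : ∀ j, 0 ≤ w' j) (b' : ℝ)
    (hV : ∀ (i : Fin n) (j : Fin m) (t : Fin k), ⟪W j, V i 0⟫ ≤ ⟪W j, V i t⟫)
    (l l' : Fin n → Fin k) (hext : ∀ i : Fin n, l i ≠ 0 → l' i = l i) :
    wcnnOutput V W b φ w' b' l ≤ wcnnOutput V W b φ w' b' l' :=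
  stmt_14_general n k m d V W b φ hφ w' hw' b' hV l l' hext
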